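/- In the W(2n|n)-module of Clifford-valued polynomials, with X = (i/√2)γ^k∂_k, one has for all a,s,t with 2a+s+t=m: ad(X)([η^a x^s ∂^t; i_1,…,i_m]) = (i/√2)[η^a x^{s-1} γ ∂^t; i_1,…,i_m], where ad(X)(w) is the supercommutator of X with w in W(2n|n), and the bracket symbols are the symmetrized sums of monomials defined over index distributions. -/

import Mathlib

/-- The product `η^{i_1 i_2} η^{i_3 i_4} ⋯` of η-entries over consecutive pairs of a list
of indices. -/
def etaPairs {n : ℕ} (η : Matrix (Fin n) (Fin n) ℂ) : List (Fin n) → ℂ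
  | i :: j :: rest => η i j * etaPairs η rest
  | _ => 1

/-- The symmetrized bracket symbol `[η^a x^r γ^s ∂^t ; i_1,…,i_m]` of the paper:
`(1/(2^a a! r! t!)) Σ_{σ ∈ S_m}` of the product of `a` η-factors, `r` x-factors,
`s` γ-factors and `t` ∂-factors, with the indices `i_{σ(1)},…,i_{σ(m)}` distributed
in order. -/
noncomputable def wcBracket {A : Type*} [Ring A] [Algebra ℂ A] {n : ℕ}
    (x d γ : Fin n → A) (η : Matrix (Fin n) (Fin n) ℂ)
    (m a r s t : ℕ) (idx : Fin m → Fin n) : A :=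
  ((1 : ℂ) / (2 ^ a * a.factorial * r.factorial * t.factorial)) •
    ∑ σ : Equiv.Perm (Fin m),
      (etaPairs η (((List.finRange m).map (fun p => idx (σ p))).take (2 * a))) •
        (((((List.finRange m).map (fun p => idx (σ p))).drop (2 * a)).take r).map x).prod *
        (((((List.finRange m).map (fun p => idx (σ p))).drop (2 * a + r)).take s).map γ).prod *
        (((((List.finRange m).map (fun p => idx (σ p))).drop (2 * a + r + s)).take t).map d).prod

/-!
On the monomial `η^a x_{i_1} ⋯ x_{i_s} ∂^t`, commuting with `∑ γ_k ∂_k` reduces to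
`γ_k [∂_k, ·]`, and `[∂_k, ·]` acts as a derivation on the `x`-factors: the commutator is the sum
over `l` of the monomial with `x_{i_l}` removed and `γ_{i_l}` inserted in front of the `∂`'s.
Moving `γ_{i_l}` from position `l` of the `x`-block to the `γ`-slot is a cyclic permutation of
positions, which the symmetrization over `S_m` absorbs. So each of the `s` terms gives the same
symmetrized sum, and `s / s! = 1 / (s - 1)!`.
-/

section Commutators

variable {A ι : Type*} [Ring A] (x d γ : ι → A)

theorem commute_list_prod_map {a : A} (h : ∀ i, Commute a (x i)) (P : List ι) :
    Commute a (P.map x).prod :=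
  Commute.list_prod_right _ _ (List.forall_mem_map.2 fun i _ => h i)

theorem mul_prod_sub_prod_mul_eq_sum_eraseIdx [DecidableEq ι]
    (hdx : ∀ i j, d i * x j - x j * d i = if i = j then 1 else 0) (k : ι) (P : List ι) :
    d k * (P.map x).prod - (P.map x).prod * d k
      = ∑ l : Fin P.length, if k = P[l] then ((P.eraseIdx l).map x).prod else 0 := by
  induction P with
  | nil => simp
  | cons p P ih =>
    have hcons : d k * (x p * (P.map x).prod) - x p * (P.map x).prod * d k
        = (d k * x p - x p * d k) * (P.map x).prod
          + x p * (d k * (P.map x).prod - (P.map x).prod * d k) := by noncomm_ring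
    simp only [List.map_cons, List.prod_cons, hcons, hdx, ih, List.length_cons,
      Fin.sum_univ_succ, Finset.mul_sum, mul_ite, mul_zero]
    simp

theorem sum_mul_sub_mul_sum_eq_sum_eraseIdx [Fintype ι] [DecidableEq ι]
    (hdd : ∀ i j, d i * d j = d j * d i)
    (hdx : ∀ i j, d i * x j - x j * d i = if i = j then 1 else 0)
    (hγx : ∀ i j, γ i * x j = x j * γ i)
    (hγd : ∀ i j, γ i * d j = d j * γ i) (P D : List ι) :
    (∑ k, γ k * d k) * ((P.map x).prod * (D.map d).prod)
        - (P.map x).prod * (D.map d).prod * ∑ k, γ k * d k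
      = ∑ l : Fin P.length, ((P.eraseIdx l).map x).prod * γ P[l] * (D.map d).prod := by
  have hterm : ∀ k, γ k * d k * ((P.map x).prod * (D.map d).prod)
      - (P.map x).prod * (D.map d).prod * (γ k * d k)
      = γ k * (d k * (P.map x).prod - (P.map x).prod * d k) * (D.map d).prod := by
    intro k
    have hγX := commute_list_prod_map x (fun i => hγx k i) P
    have hγD := commute_list_prod_map d (fun i => hγd k i) D
    have hdD := commute_list_prod_map d (fun i => hdd k i) D
    have hmove : (P.map x).prod * (D.map d).prod * (γ k * d k)
        = γ k * ((P.map x).prod * d k) * (D.map d).prod := by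
      calc (P.map x).prod * (D.map d).prod * (γ k * d k)
          = (P.map x).prod * (γ k * (D.map d).prod) * d k := by
            rw [hγD.eq]; simp only [mul_assoc]
        _ = γ k * (P.map x).prod * (d k * (D.map d).prod) := by
            rw [← mul_assoc (P.map x).prod, ← hγX.eq, hdD.eq]; simp only [mul_assoc]
        _ = γ k * ((P.map x).prod * d k) * (D.map d).prod := by
            simp only [mul_assoc]
    rw [hmove]
    noncomm_ring
  rw [Finset.sum_mul, Finset.mul_sum, ← Finset.sum_sub_distrib]
  simp only [hterm, mul_prod_sub_prod_mul_eq_sum_eraseIdx x d hdx, Finset.mul_sum,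
    Finset.sum_mul, mul_ite, ite_mul, mul_zero, zero_mul]
  rw [Finset.sum_comm]
  refine Finset.sum_congr rfl fun l _ => ?_
  rw [Finset.sum_ite_eq' Finset.univ, if_pos (Finset.mem_univ _),
    (commute_list_prod_map x (fun i => hγx _ i) _).eq]

theorem smul_mul_smul_sub_smul_mul_smul {R : Type*} [CommSemiring R] [Algebra R A] (c e : R)
    (Y W : A) : (c • Y) * (e • W) - (e • W) * (c • Y) = c • e • (Y * W - W * Y) := by
  rw [smul_mul_smul_comm, smul_mul_smul_comm, mul_comm e c, ← smul_sub, smul_smul]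

end Commutators

section Windows

variable {α : Type*} {m : ℕ}

theorem length_take_drop_map_finRange (f : Fin m → α) (i k : ℕ) :
    ((((List.finRange m).map f).drop i).take k).length = min k (m - i) := by
  simp

theorem getElem_take_drop_map_finRange (f : Fin m → α) (i k j : ℕ)
    (h : j < ((((List.finRange m).map f).drop i).take k).length) :
    ((((List.finRange m).map f).drop i).take k)[j] = f ⟨i + j, by simp at h; omega⟩ := by
  simp

theorem take_drop_map_finRange_congr {f g : Fin m → α} {i k : ℕ}
    (h : ∀ p : Fin m, i ≤ p → (p : ℕ) < i + k → f p = g p) :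
    (((List.finRange m).map f).drop i).take k = (((List.finRange m).map g).drop i).take k := by
  refine List.ext_getElem (by simp) fun j hf _ => ?_
  rw [length_take_drop_map_finRange] at hf
  simp only [getElem_take_drop_map_finRange]
  exact h _ (by simp) (by simp; omega)

theorem take_one_drop_map_finRange (f : Fin m → α) {i : ℕ} (hi : i < m) :
    (((List.finRange m).map f).drop i).take 1 = [f ⟨i, hi⟩] :=
  List.ext_getElem (by simp; omega) fun j _ h => by
    obtain rfl : j = 0 := Nat.lt_one_iff.1 (by simpa using h)
    simp

theorem eraseIdx_take_drop_map_finRange (f : Fin m → α) {i k l : ℕ} (hl : l ≤ k)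
    (hik : i + k < m) :
    ((((List.finRange m).map f).drop i).take (k + 1)).eraseIdx l
      = (((List.finRange m).map
          (fun p => f (Fin.cycleIcc ⟨i + l, by omega⟩ ⟨i + k, hik⟩ p))).drop i).take k := by
  have : NeZero m := ⟨by omega⟩
  have hlen : ((((List.finRange m).map f).drop i).take (k + 1)).length = k + 1 := by
    simp; omega
  refine List.ext_getElem (by rw [List.length_eraseIdx_of_lt (by omega), hlen]; simp; omega)
    fun j hL hR => ?_
  simp only [length_take_drop_map_finRange] at hR
  rw [List.getElem_eraseIdx]
  split_ifs with hj
  · simp only [getElem_take_drop_map_finRange]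
    rw [Fin.cycleIcc_of_lt (Fin.mk_lt_mk.2 (by omega))]
  · simp only [getElem_take_drop_map_finRange]
    rw [Fin.cycleIcc_of_ge_of_lt (Fin.mk_le_mk.2 (by omega)) (Fin.mk_lt_mk.2 (by omega))]
    congr 1
    ext
    rw [Fin.val_add_one_of_lt' (by simp; omega)]
    simp only [add_assoc]

end Windows

theorem sum_perm_sum_comp_mul {α M : Type*} [AddCommMonoid M] {m k : ℕ}
    (g : (Fin m → α) → M) (idx : Fin m → α) (c : Fin k → Equiv.Perm (Fin m)) :
    ∑ σ : Equiv.Perm (Fin m), ∑ l, g (fun p => idx (σ (c l p)))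
      = k • ∑ σ : Equiv.Perm (Fin m), g (fun p => idx (σ p)) := by
  rw [Finset.sum_comm]
  calc ∑ l, ∑ σ : Equiv.Perm (Fin m), g (fun p => idx (σ (c l p)))
      = ∑ _l : Fin k, ∑ σ : Equiv.Perm (Fin m), g (fun p => idx (σ p)) :=
        Finset.sum_congr rfl fun l _ =>
          Equiv.sum_comp (Equiv.mulRight (c l)) (fun σ => g (fun p => idx (σ p)))
    _ = _ := by simp

theorem one_div_factorials_mul_natCast {a s : ℕ} (t : ℕ) (hs : s ≠ 0) :
    (1 : ℂ) / (2 ^ a * a.factorial * s.factorial * t.factorial) * s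
      = 1 / (2 ^ a * a.factorial * (s - 1).factorial * t.factorial) := by
  obtain ⟨s, rfl⟩ := Nat.exists_eq_succ_of_ne_zero hs
  simp only [Nat.factorial_succ, Nat.succ_sub_one, Nat.cast_mul]
  field_simp

section Monomials

variable {A : Type*} [Ring A] [Algebra ℂ A] {n m : ℕ} (x d γ : Fin n → A)
  (η : Matrix (Fin n) (Fin n) ℂ)

def wcMonomial (a r s t : ℕ) (f : Fin m → Fin n) : A :=
  etaPairs η (((List.finRange m).map f).take (2 * a)) •
    (((((List.finRange m).map f).drop (2 * a)).take r).map x).prod *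
    (((((List.finRange m).map f).drop (2 * a + r)).take s).map γ).prod *
    (((((List.finRange m).map f).drop (2 * a + r + s)).take t).map d).prod

theorem wcBracket_eq_smul_sum_wcMonomial (a r s t : ℕ) (idx : Fin m → Fin n) :
    wcBracket x d γ η m a r s t idx
      = ((1 : ℂ) / (2 ^ a * a.factorial * r.factorial * t.factorial)) •
          ∑ σ : Equiv.Perm (Fin m), wcMonomial x d γ η a r s t (fun p => idx (σ p)) :=
  rfl

/-- `Fin.cycleIcc u v` sends `v` to `u` and `p` to `p + 1` for `u ≤ p < v`, so composing with it
moves the factor `x_{f u}` out of the `x`-block into the `γ`-slot at `v`. -/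
theorem wcMonomial_comp_cycleIcc {a s l : ℕ} (t : ℕ) (hl : l ≤ s) (hs : 2 * a + s < m)
    (f : Fin m → Fin n) :
    wcMonomial x d γ η a s 1 t
        (fun p => f (Fin.cycleIcc ⟨2 * a + l, by omega⟩ ⟨2 * a + s, hs⟩ p))
      = etaPairs η (((List.finRange m).map f).take (2 * a)) •
          ((((((List.finRange m).map f).drop (2 * a)).take (s + 1)).eraseIdx l).map x).prod *
          γ (((((List.finRange m).map f).drop (2 * a)).take (s + 1))[l]'(by simp; omega)) *
          (((((List.finRange m).map f).drop (2 * a + (s + 1))).take t).map d).prod := by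
  have : NeZero m := ⟨by omega⟩
  set c := Fin.cycleIcc (⟨2 * a + l, by omega⟩ : Fin m) ⟨2 * a + s, hs⟩
  have hη : ((List.finRange m).map (fun p => f (c p))).take (2 * a)
      = ((List.finRange m).map f).take (2 * a) := by
    simpa using take_drop_map_finRange_congr (i := 0)
      fun p _ hp => congrArg f (Fin.cycleIcc_of_lt (Fin.mk_lt_mk.2 (by omega)))
  have hγ : ((((List.finRange m).map (fun p => f (c p))).drop (2 * a + s)).take 1)
      = [((((List.finRange m).map f).drop (2 * a)).take (s + 1))[l]'(by simp; omega)] := by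
    rw [take_one_drop_map_finRange _ hs, getElem_take_drop_map_finRange,
      Fin.cycleIcc_of_last (Fin.mk_le_mk.2 (by omega))]
  have hd : ((((List.finRange m).map (fun p => f (c p))).drop (2 * a + s + 1)).take t)
      = ((((List.finRange m).map f).drop (2 * a + (s + 1))).take t) :=
    take_drop_map_finRange_congr
      fun p hp _ => congrArg f (Fin.cycleIcc_of_gt (Fin.mk_lt_mk.2 (by omega)))
  rw [wcMonomial, hη, ← eraseIdx_take_drop_map_finRange f hl hs, hγ, hd]
  simp only [List.map_cons, List.map_nil, List.prod_cons, List.prod_nil, mul_one]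

theorem sum_mul_wcMonomial_sub_wcMonomial_mul
    (hdd : ∀ i j, d i * d j = d j * d i)
    (hdx : ∀ i j, d i * x j - x j * d i = if i = j then 1 else 0)
    (hγx : ∀ i j, γ i * x j = x j * γ i)
    (hγd : ∀ i j, γ i * d j = d j * γ i)
    {a s : ℕ} (t : ℕ) (hm : 2 * a + s ≤ m) (f : Fin m → Fin n) :
    (∑ k, γ k * d k) * wcMonomial x d γ η a s 0 t f
        - wcMonomial x d γ η a s 0 t f * ∑ k, γ k * d k
      = ∑ l : Fin s, wcMonomial x d γ η a (s - 1) 1 t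
          (fun p => f (Fin.cycleIcc ⟨2 * a + l, by omega⟩
            ⟨2 * a + (s - 1), by have := l.isLt; omega⟩ p)) := by
  have hP : ((((List.finRange m).map f).drop (2 * a)).take s).length = s := by
    simp; omega
  simp only [wcMonomial, List.take_zero, List.map_nil, List.prod_nil, mul_one, add_zero]
  rw [smul_mul_assoc, mul_smul_comm, smul_mul_assoc, ← smul_sub,
    sum_mul_sub_mul_sum_eq_sum_eraseIdx x d γ hdd hdx hγx hγd, Finset.smul_sum,
    ← Fin.sum_congr' _ hP]
  refine Finset.sum_congr rfl fun l _ => ?_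
  obtain ⟨s, rfl⟩ : ∃ s', s = s' + 1 := ⟨s - 1, by have := l.isLt; omega⟩
  simp only [Fin.getElem_fin, Fin.val_cast, Nat.add_sub_cancel, ← smul_mul_assoc]
  exact (wcMonomial_comp_cycleIcc x d γ η t (by omega) (by omega) f).symm

end Monomials

theorem wcBracket_adX_no_gamma_general
    {A : Type*} [Ring A] [Algebra ℂ A] {n : ℕ}
    (x d γ : Fin n → A) (η : Matrix (Fin n) (Fin n) ℂ)
    (hdd : ∀ i j, d i * d j = d j * d i)
    (hdx : ∀ i j, d i * x j - x j * d i = if i = j then 1 else 0)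
    (hγx : ∀ i j, γ i * x j = x j * γ i)
    (hγd : ∀ i j, γ i * d j = d j * γ i)
    (m a s t : ℕ) (hlen : 2 * a + s + t = m) (idx : Fin m → Fin n) :
    ((Complex.I / (Real.sqrt 2 : ℂ)) • ∑ k, γ k * d k) * wcBracket x d γ η m a s 0 t idx
      - wcBracket x d γ η m a s 0 t idx * ((Complex.I / (Real.sqrt 2 : ℂ)) • ∑ k, γ k * d k)
      = if s = 0 then 0
        else (Complex.I / (Real.sqrt 2 : ℂ)) • wcBracket x d γ η m a (s - 1) 1 t idx := by
  have hsum (τ : Equiv.Perm (Fin m)) :=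
    sum_mul_wcMonomial_sub_wcMonomial_mul x d γ η hdd hdx hγx hγd t (a := a) (s := s)
      (by omega) (fun p => idx (τ p))
  rw [wcBracket_eq_smul_sum_wcMonomial, smul_mul_smul_sub_smul_mul_smul, Finset.mul_sum,
    Finset.sum_mul, ← Finset.sum_sub_distrib, Finset.sum_congr rfl fun τ _ => hsum τ,
    sum_perm_sum_comp_mul (wcMonomial x d γ η a (s - 1) 1 t)]
  split_ifs with hs
  · simp [hs]
  · rw [wcBracket_eq_smul_sum_wcMonomial, ← Nat.cast_smul_eq_nsmul ℂ, smul_smul _ (s : ℂ),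
      one_div_factorials_mul_natCast t hs]

/-- with `X = (i/√2) γ^k ∂_k` and `2a+s+t = m`,
`ad(X)([η^a x^s ∂^t; i_1,…,i_m]) = (i/√2)·[η^a x^{s-1} γ ∂^t; i_1,…,i_m]`
(the bracket with an `x`-exponent `< 0` being zero by convention; since
`[η^a x^s ∂^t]` is even, `ad(X)` is the ordinary commutator with `X`). -/
theorem wcBracket_adX_no_gamma
    {A : Type*} [Ring A] [Algebra ℂ A] {n : ℕ}
    (x d γ : Fin n → A) (η : Matrix (Fin n) (Fin n) ℂ)
    (hsym : ∀ i j, η i j = η j i)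
    (hxx : ∀ i j, x i * x j = x j * x i)
    (hdd : ∀ i j, d i * d j = d j * d i)
    (hdx : ∀ i j, d i * x j - x j * d i = if i = j then 1 else 0)
    (hγx : ∀ i j, γ i * x j = x j * γ i)
    (hγd : ∀ i j, γ i * d j = d j * γ i)
    (hγγ : ∀ i j, γ i * γ j + γ j * γ i = (2 * η i j) • (1 : A))
    (m a s t : ℕ) (hlen : 2 * a + s + t = m) (idx : Fin m → Fin n) :
    ((Complex.I / (Real.sqrt 2 : ℂ)) • ∑ k, γ k * d k) * wcBracket x d γ η m a s 0 t idx
      - wcBracket x d γ η m a s 0 t idx * ((Complex.I / (Real.sqrt 2 : ℂ)) • ∑ k, γ k * d k)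
      = if s = 0 then 0
        else (Complex.I / (Real.sqrt 2 : ℂ)) • wcBracket x d γ η m a (s - 1) 1 t idx :=
  wcBracket_adX_no_gamma_general x d γ η hdd hdx hγx hγd m a s t hlen idx
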